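/- Given a graph G and any search schedule S, for every time step t the set of e-clear nodes is a subset of the set of n-clear nodes and the set of e-clear edges is a subset of the set of n-clear edges; i.e., the node game dominates the edge game. -/

import Mathlib

open SimpleGraph

/-- A move in a graph-search game: place a searcher, remove a searcher,
or slide a searcher along an edge. -/
inductive GMove (V : Type*) where
  | place (v : V)
  | remove (v : V)
  | slide (u v : V)

namespace GMove

/-- The node (if any) entered by the move. -/
def target {V : Type*} : GMove V → Option V
  | place v => some v
  | remove _ => none
  | slide _ v => some v

/-- The edge (if any) traversed by the move. -/
def traversed {V : Type*} : GMove V → Option (Sym2 V)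
  | slide u v => some s(u, v)
  | _ => none

end GMove

variable {V : Type*}

open Classical in
/-- Number of searchers located at each node after `t` moves
(the move between time `t` and `t+1` is `S t`). -/
noncomputable def occ (S : ℕ → GMove V) : ℕ → V → ℕ
  | 0 => fun _ => 0
  | t + 1 => fun x =>
    match S t with
    | .place v => if x = v then occ S t x + 1 else occ S t x
    | .remove v => if x = v then occ S t x - 1 else occ S t x
    | .slide u v =>
        if x = v then occ S t x + 1 else if x = u then occ S t x - 1 else occ S t x

/-- Number of searchers inside the graph after `t` moves. -/
def sn (S : ℕ → GMove V) : ℕ → ℕ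
  | 0 => 0
  | t + 1 =>
    match S t with
    | .place _ => sn S t + 1
    | .remove _ => sn S t - 1
    | .slide _ _ => sn S t

/-- A legal search schedule on `G`: slides go along edges starting from an occupied
node, and removals take place at occupied nodes. -/
def Legal (G : SimpleGraph V) (S : ℕ → GMove V) : Prop :=
  ∀ t, match S t with
    | .place _ => True
    | .remove v => 0 < occ S t v
    | .slide u v => G.Adj u v ∧ 0 < occ S t u

/-- An internal schedule never removes searchers from the graph. -/
def Internal (S : ℕ → GMove V) : Prop := ∀ t v, S t ≠ GMove.remove v

/-- A rooted schedule places searchers only at the root `r`. -/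
def RootedAt (S : ℕ → GMove V) (r : V) : Prop := ∀ t v, S t = GMove.place v → v = r

/-- The set of n-dirty nodes of the node game: initially all nodes are n-dirty;
after a move, a node is n-dirty iff it is joined to a previously n-dirty node by a
path all of whose nodes are unguarded. -/
def ndirty (G : SimpleGraph V) (S : ℕ → GMove V) : ℕ → Set V
  | 0 => Set.univ
  | t + 1 =>
    { u | ∃ w, w ∈ ndirty G S t ∧ ∃ p : G.Walk u w, ∀ x ∈ p.support, occ S (t + 1) x = 0 }

/-- The set of n-dirty edges: edges incident to an n-dirty node. -/
def nEdgeDirty (G : SimpleGraph V) (S : ℕ → GMove V) (t : ℕ) : Set (Sym2 V) :=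
  { e | e ∈ G.edgeSet ∧ ∃ v ∈ e, v ∈ ndirty G S t }

/-- The set of e-dirty edges of the edge game: initially all edges are e-dirty;
a traversed edge is cleared, and an edge is recontaminated when joined to a
(still) e-dirty edge by a path whose interior nodes are unguarded. -/
def edirty (G : SimpleGraph V) (S : ℕ → GMove V) : ℕ → Set (Sym2 V)
  | 0 => G.edgeSet
  | t + 1 =>
    (edirty G S t \ { e | (S t).traversed = some e }) ∪
      { e | ∃ x y q q', e = s(x, y) ∧ G.Adj x y ∧ G.Adj q q' ∧
          (s(q, q') ∈ edirty G S t ∧ (S t).traversed ≠ some s(q, q')) ∧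
          ∃ p : G.Walk y q, ∀ z ∈ p.support, occ S (t + 1) z = 0 }

/-- A node is e-dirty iff it is unguarded and adjacent to an e-dirty edge. -/
def edirtyNode (G : SimpleGraph V) (S : ℕ → GMove V) (t : ℕ) : Set V :=
  { v | occ S t v = 0 ∧ ∃ e ∈ edirty G S t, v ∈ e }

/-- The set of m-dirty edges of the mixed edge game: as in the edge game, but in
addition an edge both of whose endpoints are guarded becomes m-clear. -/
def mdirty (G : SimpleGraph V) (S : ℕ → GMove V) : ℕ → Set (Sym2 V)
  | 0 => G.edgeSet
  | t + 1 =>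
    (mdirty G S t \
        ({ e | (S t).traversed = some e } ∪ { e | ∀ v ∈ e, 0 < occ S (t + 1) v })) ∪
      { e | ∃ x y q q', e = s(x, y) ∧ G.Adj x y ∧ G.Adj q q' ∧
          (s(q, q') ∈ mdirty G S t ∧ (S t).traversed ≠ some s(q, q') ∧
            ¬ (∀ v ∈ (s(q, q') : Sym2 V), 0 < occ S (t + 1) v)) ∧
          ∃ p : G.Walk y q, ∀ z ∈ p.support, occ S (t + 1) z = 0 }

/-- A node is m-dirty iff it is unguarded and adjacent to an m-dirty edge. -/
def mdirtyNode (G : SimpleGraph V) (S : ℕ → GMove V) (t : ℕ) : Set V :=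
  { v | occ S t v = 0 ∧ ∃ e ∈ mdirty G S t, v ∈ e }

/-- The n-clear subgraph: n-clear nodes and all edges of `G` between them. -/
def nclearSubgraph (G : SimpleGraph V) (S : ℕ → GMove V) (t : ℕ) : G.Subgraph where
  verts := (ndirty G S t)ᶜ
  Adj a b := G.Adj a b ∧ a ∉ ndirty G S t ∧ b ∉ ndirty G S t
  adj_sub h := h.1
  edge_vert h := h.2.1
  symm := ⟨fun a b h => ⟨h.1.symm, h.2.2, h.2.1⟩⟩

/-- The e-clear subgraph: e-clear nodes and e-clear edges. -/
def eclearSubgraph (G : SimpleGraph V) (S : ℕ → GMove V) (t : ℕ) : G.Subgraph where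
  verts := { v | v ∉ edirtyNode G S t } ∪ { v | ∃ e ∈ G.edgeSet \ edirty G S t, v ∈ e }
  Adj a b := G.Adj a b ∧ s(a, b) ∈ G.edgeSet \ edirty G S t
  adj_sub h := h.1
  edge_vert {a b} h := Or.inr ⟨s(a, b), h.2, Sym2.mem_mk_left a b⟩
  symm := ⟨fun a b h => ⟨h.1.symm, by rw [Sym2.eq_swap]; exact h.2⟩⟩

/-! A node that is n-dirty at time `t + 1` is joined by an unguarded walk to a node `w` that
was n-dirty at time `t`. Inductively every edge at `w` was e-dirty, and since `w` is unguarded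
before and after the move, no legal move traverses an edge at `w`; the unguarded walk then
recontaminates every edge at the new node. So n-dirty nodes have only e-dirty edges, and, if
no node is isolated, are themselves e-dirty. -/

section Domination

variable {G : SimpleGraph V} {S : ℕ → GMove V}

lemma occ_succ_of_slide {t : ℕ} {u v : V} (h : S t = .slide u v) :
    occ S (t + 1) v = occ S t v + 1 := by
  simp [occ, h]

lemma occ_eq_zero_of_mem_ndirty : ∀ {t : ℕ} {v : V}, v ∈ ndirty G S t → occ S t v = 0
  | 0, _, _ => rfl
  | _ + 1, _, ⟨_, _, p, hp⟩ => hp _ p.start_mem_support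

lemma Legal.traversed_ne (hL : Legal G S) {t : ℕ} {w : V} (hbefore : occ S t w = 0)
    (hafter : occ S (t + 1) w = 0) (q : V) : (S t).traversed ≠ some s(w, q) := by
  rcases hSt : S t with _ | _ | ⟨a, b⟩
  · simp [GMove.traversed]
  · simp [GMove.traversed]
  · have hLt := hL t
    rw [hSt] at hLt
    intro h
    rcases Sym2.eq_iff.1 (Option.some.inj h) with ⟨rfl, -⟩ | ⟨-, rfl⟩
    · exact hLt.2.ne' hbefore
    · have := occ_succ_of_slide hSt
      omega

theorem mem_edirty_of_mem_ndirty (hdeg : ∀ v, ∃ u, G.Adj v u) (hL : Legal G S) :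
    ∀ {t : ℕ} {v : V}, v ∈ ndirty G S t → ∀ e ∈ G.edgeSet, v ∈ e → e ∈ edirty G S t
  | 0, _, _, _, he, _ => he
  | t + 1, v, ⟨w, hw, p, hp⟩, e, he, hve => by
    obtain ⟨x, rfl⟩ := Sym2.mem_iff_exists.1 hve
    obtain ⟨q, hwq⟩ := hdeg w
    have hwq_dirty : s(w, q) ∈ edirty G S t :=
      mem_edirty_of_mem_ndirty hdeg hL hw _ hwq (Sym2.mem_mk_left _ _)
    have hwq_kept : (S t).traversed ≠ some s(w, q) :=
      hL.traversed_ne (occ_eq_zero_of_mem_ndirty hw) (hp w p.end_mem_support) q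
    exact Or.inr ⟨x, v, w, q, Sym2.eq_swap, (G.mem_edgeSet.1 he).symm, hwq,
      ⟨hwq_dirty, hwq_kept⟩, p, hp⟩

lemma nEdgeDirty_subset_edirty (hdeg : ∀ v, ∃ u, G.Adj v u) (hL : Legal G S) (t : ℕ) :
    nEdgeDirty G S t ⊆ edirty G S t := fun e ⟨he, _, hve, hv⟩ =>
  mem_edirty_of_mem_ndirty hdeg hL hv e he hve

lemma ndirty_subset_edirtyNode (hdeg : ∀ v, ∃ u, G.Adj v u) (hL : Legal G S) (t : ℕ) :
    ndirty G S t ⊆ edirtyNode G S t := fun v hv =>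
  have ⟨u, hvu⟩ := hdeg v
  ⟨occ_eq_zero_of_mem_ndirty hv, s(v, u),
    mem_edirty_of_mem_ndirty hdeg hL hv _ hvu (Sym2.mem_mk_left _ _), Sym2.mem_mk_left _ _⟩

end Domination

theorem SimpleGraph.Connected.exists_adj_of_edgeSet_nonempty {G : SimpleGraph V}
    (hconn : G.Connected) (hne : G.edgeSet.Nonempty) (v : V) : ∃ u, G.Adj v u := by
  obtain ⟨a, b, hab⟩ := ne_bot_iff_exists_adj.1 (edgeSet_nonempty.1 hne)
  have := hab.nontrivial
  exact hconn.preconnected.exists_adj_of_nontrivial v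

/-- For every search schedule and every time `t`, the set of e-clear nodes is
contained in the set of n-clear nodes and the set of e-clear edges is contained in
the set of n-clear edges: the node game dominates the edge game. -/
theorem stmt3 {V : Type*} (G : SimpleGraph V) (hconn : G.Connected)
    (hne : G.edgeSet.Nonempty) (S : ℕ → GMove V) (hL : Legal G S) :
    ∀ t : ℕ, { v | v ∉ edirtyNode G S t } ⊆ { v | v ∉ ndirty G S t } ∧
      G.edgeSet \ edirty G S t ⊆ G.edgeSet \ nEdgeDirty G S t := by
  have hdeg := hconn.exists_adj_of_edgeSet_nonempty hne
  exact fun t => ⟨Set.compl_subset_compl.2 (ndirty_subset_edirtyNode hdeg hL t),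
    Set.sdiff_subset_sdiff_right (nEdgeDirty_subset_edirty hdeg hL t)⟩
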